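/- arXiv:1302.4401 — 6 statements merged into one kernel-verified Lean document; each statement's English description precedes it below -/
import Mathlib

section
/- Every extremal pure simplicial complex is shellable. (Combinatorial form of the Herzog–Hibi theorem, obtained from the main theorem together with the implication 'vertex decomposable ⇒ shellable'.) -/
open Finset

/-- The least possible number of `(k-1)`-element sets in the shadow of a family
of `n` distinct `k`-element sets. -/
noncomputable def minShadow (n k : ℕ) : ℕ :=
  sInf {m | ∃ U : Finset (Finset ℕ),
    U.card = n ∧ (∀ A ∈ U, A.card = k) ∧ (Finset.shadow U).card = m}

/-- A (finite abstract) simplicial complex: a nonempty family of finite sets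
closed under taking subsets. -/
def IsComplex (Δ : Finset (Finset ℕ)) : Prop :=
  Δ.Nonempty ∧ ∀ σ ∈ Δ, ∀ τ ⊆ σ, τ ∈ Δ

/-- The facets (maximal faces) of `Δ`. -/
def facets (Δ : Finset (Finset ℕ)) : Finset (Finset ℕ) :=
  Δ.filter fun σ => ∀ τ ∈ Δ, σ ⊆ τ → σ = τ

/-- `Δ` is pure of dimension `d`: every facet has `d + 1` elements. -/
def IsPureDim (Δ : Finset (Finset ℕ)) (d : ℕ) : Prop :=
  ∀ σ ∈ facets Δ, σ.card = d + 1

/-- `Δ` is pure: all facets have the same number of elements. -/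
def IsPure (Δ : Finset (Finset ℕ)) : Prop :=
  ∃ k, ∀ σ ∈ facets Δ, σ.card = k

/-- The link of the vertex `x` in `Δ`:
`lk_Δ(x) = {τ ∈ Δ : x ∉ τ and τ ∪ {x} ∈ Δ}`. -/
def link (Δ : Finset (Finset ℕ)) (x : ℕ) : Finset (Finset ℕ) :=
  Δ.filter fun τ => x ∉ τ ∧ insert x τ ∈ Δ

/-- The deletion of the vertex `x` from `Δ`: `Δ ∖ x = {τ ∈ Δ : x ∉ τ}`. -/
def deletion (Δ : Finset (Finset ℕ)) (x : ℕ) : Finset (Finset ℕ) :=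
  Δ.filter fun τ => x ∉ τ

/-- `Δ` is an extremal complex of dimension `d`: it is a pure simplicial complex
of dimension `d` whose number of `d`-element faces is the least possible among
all families of `(facets Δ).card` sets of size `d + 1`. -/
def IsExtremal (Δ : Finset (Finset ℕ)) (d : ℕ) : Prop :=
  IsComplex Δ ∧ IsPureDim Δ d ∧
  (Δ.filter fun σ => σ.card = d).card = minShadow (facets Δ).card (d + 1)

/-- Vertex decomposability of a pure simplicial complex: either `Δ` consists only
of the empty face, or `Δ` is a single vertex, or some vertex `x` has both link and
deletion pure and vertex decomposable. -/
inductive VertexDecomposable : Finset (Finset ℕ) → Prop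
  | emptyFace : VertexDecomposable {∅}
  | point (x : ℕ) : VertexDecomposable {∅, {x}}
  | step (Δ : Finset (Finset ℕ)) (x : ℕ) (hx : {x} ∈ Δ)
      (hl₁ : IsPure (link Δ x)) (hl₂ : VertexDecomposable (link Δ x))
      (hd₁ : IsPure (deletion Δ x)) (hd₂ : VertexDecomposable (deletion Δ x)) :
      VertexDecomposable Δ

/-- Shellability of a pure simplicial complex: the facets can be ordered
`F 0, F 1, …, F (n-1)` so that for each `j ≥ 1` and each `i < j` there is
`i' < j` with `|F j ∩ F i'| = |F j| - 1` and `F j ∩ F i ⊆ F j ∩ F i'`. -/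
def IsShellable (Δ : Finset (Finset ℕ)) : Prop :=
  ∃ (n : ℕ) (F : ℕ → Finset ℕ),
    facets Δ = (Finset.range n).image F ∧
    (∀ i < n, ∀ j < n, F i = F j → i = j) ∧
    ∀ j, 1 ≤ j → j < n → ∀ i < j, ∃ i' < j,
      (F j ∩ F i').card = (F j).card - 1 ∧ F j ∩ F i ⊆ F j ∩ F i'

/-!
The facets of an extremal complex of dimension `d` form a family `𝒜` of `(d+1)`-sets with the
least possible shadow. Split `𝒜` at a vertex `x` into `𝒩`, the facets avoiding `x` (the facets of
the deletion), and `ℳ`, the facets through `x` with `x` removed (the facets of the link). Then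
`|∂𝒜| = |∂𝒩 ∪ ℳ| + |∂ℳ|`, while coning a colex initial segment from a fresh vertex and
Kruskal–Katona give `minShadow (|𝒩| + |ℳ|) ≤ max (minShadow |𝒩|) |ℳ| + minShadow |ℳ|`.
Comparing the two, the link is again extremal, and if `|ℳ| ≤ minShadow |𝒩|` then `ℳ ⊆ ∂𝒩` and
the deletion is extremal too. Such a vertex exists once there are two facets: otherwise `𝒜` is
closed under exchanging vertices, hence consists of all `(d+1)`-subsets of its vertex set, which
contradicts the Lovász form of Kruskal–Katona. By induction, shelling the deletion and then the
cone over a shelling of the link shells the complex, because every facet of the link lies in a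
facet of the deletion.
-/

open FinsetFamily Finset.Colex

section Transfer

variable {α β : Type*} [DecidableEq α] [DecidableEq β]

lemma shadow_map_mapEmbedding (f : α ↪ β) (𝒜 : Finset (Finset α)) :
    ∂ (𝒜.map (mapEmbedding f).toEmbedding) = (∂ 𝒜).map (mapEmbedding f).toEmbedding := by
  ext t
  simp only [mem_shadow_iff, mem_map, RelEmbedding.coe_toEmbedding, mapEmbedding_apply]
  constructor
  · rintro ⟨_, ⟨s, hs, rfl⟩, _, hb, rfl⟩
    obtain ⟨a, ha, rfl⟩ := mem_map.1 hb
    exact ⟨s.erase a, ⟨s, hs, a, ha, rfl⟩, map_erase f s a⟩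
  · rintro ⟨_, ⟨s, hs, a, ha, rfl⟩, rfl⟩
    exact ⟨s.map f, ⟨s, hs, rfl⟩, f a, mem_map_of_mem f ha, (map_erase f s a).symm⟩

lemma exists_forall_subset_range (𝒜 : Finset (Finset ℕ)) : ∃ K, ∀ s ∈ 𝒜, s ⊆ range K := by
  obtain ⟨K, hK⟩ := exists_nat_subset_range (𝒜.sup id)
  exact ⟨K, fun s hs => (le_sup (f := id) hs).trans hK⟩

lemma exists_fin_family_of_subset_range {K r : ℕ} {𝒜 : Finset (Finset ℕ)}
    (h𝒜 : (𝒜 : Set (Finset ℕ)).Sized r) (hK : ∀ s ∈ 𝒜, s ⊆ range K) :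
    ∃ ℬ : Finset (Finset (Fin K)),
      (ℬ : Set (Finset (Fin K))).Sized r ∧ #ℬ = #𝒜 ∧ #(∂ ℬ) = #(∂ 𝒜) := by
  have hsub :
      𝒜 ⊆ (univ : Finset (Finset (Fin K))).map (mapEmbedding Fin.valEmbedding).toEmbedding := by
    intro s hs
    obtain ⟨u, -, rfl⟩ := subset_map_iff.1 (by simpa [Nat.Iio_eq_range] using hK s hs :
      s ⊆ (univ : Finset (Fin K)).map Fin.valEmbedding)
    simp
  obtain ⟨ℬ, -, rfl⟩ := subset_map_iff.1 hsub
  refine ⟨ℬ, fun s hs => ?_, (card_map _).symm, by rw [shadow_map_mapEmbedding, card_map]⟩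
  simpa using h𝒜 (mem_map_of_mem _ hs)

end Transfer

section MinShadow

variable {k : ℕ}

lemma minShadow_le_card_shadow {𝒜 : Finset (Finset ℕ)} (h𝒜 : (𝒜 : Set (Finset ℕ)).Sized k) :
    minShadow #𝒜 k ≤ #(∂ 𝒜) :=
  Nat.sInf_le ⟨𝒜, rfl, fun _ hs => h𝒜 hs, rfl⟩

lemma exists_card_shadow_eq_minShadow {𝒜 : Finset (Finset ℕ)}
    (h𝒜 : (𝒜 : Set (Finset ℕ)).Sized k) :
    ∃ ℬ : Finset (Finset ℕ), (ℬ : Set (Finset ℕ)).Sized k ∧ #ℬ = #𝒜 ∧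
      #(∂ ℬ) = minShadow #𝒜 k := by
  obtain ⟨ℬ, hcard, hsized, hshadow⟩ : minShadow #𝒜 k ∈ _ :=
    Nat.sInf_mem ⟨_, 𝒜, rfl, fun _ hs => h𝒜 hs, rfl⟩
  exact ⟨ℬ, fun _ hs => hsized _ hs, hcard, hshadow⟩

lemma choose_le_card_shadow {a : ℕ} (ha : k + 1 ≤ a) {𝒜 : Finset (Finset ℕ)}
    (h𝒜 : (𝒜 : Set (Finset ℕ)).Sized (k + 1)) (hcard : a.choose (k + 1) ≤ #𝒜) :
    a.choose k ≤ #(∂ 𝒜) := by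
  obtain ⟨K, hK⟩ := exists_forall_subset_range 𝒜
  obtain ⟨ℬ, hℬ, hcardℬ, hshadow⟩ := exists_fin_family_of_subset_range (K := max K a) h𝒜
    fun s hs => (hK s hs).trans (range_subset_range.2 (le_max_left _ _))
  have := kruskal_katona_lovasz_form (i := 1) le_add_self ha (le_max_right _ _) hℬ
    (hcardℬ ▸ hcard)
  simpa [hshadow] using this

lemma choose_le_minShadow {a : ℕ} (ha : k + 1 ≤ a) :
    a.choose k ≤ minShadow (a.choose (k + 1)) (k + 1) := by
  obtain ⟨ℬ, hℬ, hcard, hshadow⟩ :=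
    exists_card_shadow_eq_minShadow (Set.sized_powersetCard (range a) (k + 1))
  rw [card_powersetCard, card_range] at hcard hshadow
  exact hshadow ▸ choose_le_card_shadow ha hℬ hcard.ge

end MinShadow

section VertexSplit

variable {α : Type*} [DecidableEq α] {𝒜 ℬ : Finset (Finset α)} {a : α} {k : ℕ}

lemma nonMemberSubfamily_shadow (𝒜 : Finset (Finset α)) (a : α) :
    (∂ 𝒜).nonMemberSubfamily a = ∂ (𝒜.nonMemberSubfamily a) ∪ 𝒜.memberSubfamily a := by
  ext t
  simp only [mem_nonMemberSubfamily, mem_union, mem_memberSubfamily, mem_shadow_iff_insert_mem]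
  constructor
  · rintro ⟨⟨b, hbt, hb⟩, hat⟩
    obtain rfl | hba := eq_or_ne b a
    · exact Or.inr ⟨hb, hat⟩
    · exact Or.inl ⟨b, hbt, hb, by simp [hba.symm, hat]⟩
  · rintro (⟨b, hbt, hb, hab⟩ | ⟨ht, hat⟩)
    · exact ⟨⟨b, hbt, hb⟩, fun h => hab (mem_insert_of_mem h)⟩
    · exact ⟨⟨a, hat, ht⟩, hat⟩

lemma memberSubfamily_shadow (𝒜 : Finset (Finset α)) (a : α) :
    (∂ 𝒜).memberSubfamily a = ∂ (𝒜.memberSubfamily a) := by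
  ext t
  simp only [mem_memberSubfamily, mem_shadow_iff_insert_mem, mem_insert, not_or]
  constructor
  · rintro ⟨⟨b, ⟨hba, hbt⟩, hb⟩, hat⟩
    exact ⟨b, hbt, by rwa [insert_comm], by simp [Ne.symm hba, hat]⟩
  · rintro ⟨b, hbt, hb, hab, hat⟩
    exact ⟨⟨b, ⟨Ne.symm hab, hbt⟩, by rwa [insert_comm]⟩, hat⟩

lemma card_shadow_eq_card_shadow_union_add (𝒜 : Finset (Finset α)) (a : α) :
    #(∂ 𝒜) = #(∂ (𝒜.nonMemberSubfamily a) ∪ 𝒜.memberSubfamily a) +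
      #(∂ (𝒜.memberSubfamily a)) := by
  rw [← card_memberSubfamily_add_card_nonMemberSubfamily a (∂ 𝒜), nonMemberSubfamily_shadow,
    memberSubfamily_shadow, add_comm]

lemma nonMemberSubfamily_union_image_insert (h𝒜 : ∀ s ∈ 𝒜, a ∉ s) :
    (𝒜 ∪ ℬ.image (insert a)).nonMemberSubfamily a = 𝒜 := by
  rw [nonMemberSubfamily_union, nonMemberSubfamily_image_insert, union_empty]
  exact filter_true_of_mem h𝒜

lemma memberSubfamily_union_image_insert (h𝒜 : ∀ s ∈ 𝒜, a ∉ s) (hℬ : ∀ s ∈ ℬ, a ∉ s) :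
    (𝒜 ∪ ℬ.image (insert a)).memberSubfamily a = ℬ := by
  rw [memberSubfamily_union, memberSubfamily_image_insert hℬ, union_eq_right]
  intro s hs
  exact absurd (mem_insert_self a s) (h𝒜 _ (mem_memberSubfamily.1 hs).1)

lemma nonMemberSubfamily_union_image_insert_memberSubfamily (𝒜 : Finset (Finset α)) (a : α) :
    𝒜.nonMemberSubfamily a ∪ (𝒜.memberSubfamily a).image (insert a) = 𝒜 := by
  rw [image_insert_memberSubfamily, nonMemberSubfamily, union_comm, filter_union_filter_not_eq]

lemma nonMemberSubfamily_powersetCard (s : Finset α) (a : α) (r : ℕ) :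
    (powersetCard r s).nonMemberSubfamily a = powersetCard r (s.erase a) := by
  ext t
  simp only [mem_nonMemberSubfamily, mem_powersetCard, subset_erase]
  tauto

lemma memberSubfamily_powersetCard {s : Finset α} (ha : a ∈ s) (r : ℕ) :
    (powersetCard (r + 1) s).memberSubfamily a = powersetCard r (s.erase a) := by
  ext t
  simp only [mem_memberSubfamily, mem_powersetCard, subset_erase, insert_subset_iff]
  constructor
  · rintro ⟨⟨⟨-, hts⟩, hcard⟩, hat⟩
    exact ⟨⟨hts, hat⟩, by rwa [card_insert_of_notMem hat, add_left_inj] at hcard⟩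
  · rintro ⟨⟨hts, hat⟩, rfl⟩
    exact ⟨⟨⟨ha, hts⟩, card_insert_of_notMem hat⟩, hat⟩

lemma Set.Sized.nonMemberSubfamily (h𝒜 : (𝒜 : Set (Finset α)).Sized k) :
    (𝒜.nonMemberSubfamily a : Set (Finset α)).Sized k :=
  fun _ hs => h𝒜 (mem_nonMemberSubfamily.1 hs).1

lemma Set.Sized.memberSubfamily (h𝒜 : (𝒜 : Set (Finset α)).Sized (k + 1)) :
    (𝒜.memberSubfamily a : Set (Finset α)).Sized k := by
  intro s hs
  obtain ⟨hs, has⟩ := mem_memberSubfamily.1 hs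
  simpa [card_insert_of_notMem has] using h𝒜 hs

end VertexSplit

section SplitBound

variable {k : ℕ}

lemma exists_isInitSeg {K n : ℕ} (hn : n ≤ K.choose k) :
    ∃ 𝒞 : Finset (Finset (Fin K)), IsInitSeg 𝒞 k ∧ #𝒞 = n := by
  induction n with
  | zero => exact ⟨∅, isInitSeg_empty, card_empty⟩
  | succ n ih =>
    obtain ⟨𝒞, h𝒞, rfl⟩ := ih (by omega)
    -- add the colex-least `k`-set not yet in `𝒞`
    obtain ⟨s, hs, hmin⟩ := exists_min_image (powersetCard k univ \ 𝒞) toColex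
      (sdiff_nonempty.2 fun h => by
        have := card_le_card h; rw [card_powersetCard, card_univ, Fintype.card_fin] at this; omega)
    rw [mem_sdiff, mem_powersetCard] at hs
    refine ⟨insert s 𝒞, ⟨?_, ?_⟩, card_insert_of_notMem hs.2⟩
    · intro u hu
      rcases mem_insert.1 hu with rfl | hu
      exacts [hs.1.2, h𝒞.1 hu]
    · rintro u t hu ⟨htu, ht⟩
      rcases mem_insert.1 hu with rfl | hu
      · by_contra htC
        refine (hmin t ?_).not_gt htu
        exact mem_sdiff.2
          ⟨mem_powersetCard.2 ⟨subset_univ t, ht⟩, fun h => htC (mem_insert_of_mem h)⟩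
      · exact mem_insert_of_mem (h𝒞.2 hu ⟨htu, ht⟩)

lemma minShadow_add_le_of_notMem {𝒜 ℬ : Finset (Finset ℕ)} {v : ℕ}
    (h𝒜 : (𝒜 : Set (Finset ℕ)).Sized (k + 1)) (hℬ : (ℬ : Set (Finset ℕ)).Sized k)
    (hv𝒜 : ∀ s ∈ 𝒜, v ∉ s) (hvℬ : ∀ s ∈ ℬ, v ∉ s) :
    minShadow (#𝒜 + #ℬ) (k + 1) ≤ #(∂ 𝒜 ∪ ℬ) + #(∂ ℬ) := by
  set 𝒞 := 𝒜 ∪ ℬ.image (insert v)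
  have hnon : 𝒞.nonMemberSubfamily v = 𝒜 := nonMemberSubfamily_union_image_insert hv𝒜
  have hmem : 𝒞.memberSubfamily v = ℬ := memberSubfamily_union_image_insert hv𝒜 hvℬ
  have h𝒞 : (𝒞 : Set (Finset ℕ)).Sized (k + 1) := by
    intro s hs
    rcases mem_union.1 hs with hs | hs
    · exact h𝒜 hs
    · obtain ⟨t, ht, rfl⟩ := mem_image.1 hs
      rw [card_insert_of_notMem (hvℬ t ht), hℬ ht]
  have := minShadow_le_card_shadow h𝒞
  rwa [← card_memberSubfamily_add_card_nonMemberSubfamily v,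
    card_shadow_eq_card_shadow_union_add 𝒞 v, hnon, hmem, add_comm] at this

lemma minShadow_add_le {𝒜 ℬ : Finset (Finset ℕ)} (h𝒜 : (𝒜 : Set (Finset ℕ)).Sized (k + 1))
    (hℬ : (ℬ : Set (Finset ℕ)).Sized k) :
    minShadow (#𝒜 + #ℬ) (k + 1) ≤ max #(∂ 𝒜) #ℬ + #(∂ ℬ) := by
  obtain ⟨K, hK⟩ := exists_forall_subset_range (𝒜 ∪ ℬ)
  obtain ⟨𝒜', h𝒜', h𝒜'card, h𝒜'shadow⟩ :=
    exists_fin_family_of_subset_range h𝒜 fun s hs => hK s (mem_union_left _ hs)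
  obtain ⟨ℬ', hℬ', hℬ'card, hℬ'shadow⟩ :=
    exists_fin_family_of_subset_range hℬ fun s hs => hK s (mem_union_right _ hs)
  have hle {r : ℕ} {𝒟 : Finset (Finset (Fin K))} (h : (𝒟 : Set (Finset (Fin K))).Sized r) :
      #𝒟 ≤ K.choose r := by
    simpa using card_le_card fun s hs => mem_powersetCard.2 ⟨subset_univ s, h hs⟩
  obtain ⟨𝒞₁, h𝒞₁, h𝒞₁card⟩ := exists_isInitSeg (hle h𝒜')
  obtain ⟨𝒞₂, h𝒞₂, h𝒞₂card⟩ := exists_isInitSeg (hle hℬ')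
  -- Move the initial segments back to `ℕ`, where `K` is a fresh vertex for them.
  set φ := (mapEmbedding (Fin.valEmbedding (n := K))).toEmbedding
  have hφ {r : ℕ} {𝒟 : Finset (Finset (Fin K))} (h : IsInitSeg 𝒟 r) :
      ((𝒟.map φ : Finset (Finset ℕ)) : Set (Finset ℕ)).Sized r ∧ ∀ s ∈ 𝒟.map φ, K ∉ s := by
    refine ⟨fun _ hs => ?_, fun _ hs hK => ?_⟩ <;> obtain ⟨s, hs𝒟, rfl⟩ := mem_map.1 hs
    · simpa [φ] using h.1 hs𝒟
    · obtain ⟨x, -, hx⟩ : ∃ x ∈ s, (x : ℕ) = K := by simpa [φ] using hK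
      exact x.isLt.ne hx
  have hsplit := minShadow_add_le_of_notMem (hφ h𝒞₁).1 (hφ h𝒞₂).1 (hφ h𝒞₁).2 (hφ h𝒞₂).2
  rw [card_map, card_map, h𝒞₁card, h𝒞₂card, h𝒜'card, hℬ'card, shadow_map_mapEmbedding,
    shadow_map_mapEmbedding, ← map_union, card_map, card_map] at hsplit
  refine hsplit.trans (add_le_add ?_ (hℬ'shadow ▸ kruskal_katona hℬ' h𝒞₂card.le h𝒞₂))
  -- `∂ 𝒞₁` and `𝒞₂` are initial segments of the same colex order, so one contains the other.
  rcases h𝒞₁.shadow.total h𝒞₂ with h | h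
  · rw [union_eq_right.2 h, h𝒞₂card, hℬ'card]
    exact le_max_right _ _
  · rw [union_eq_left.2 h, ← h𝒜'shadow]
    exact (kruskal_katona h𝒜' h𝒞₁card.le h𝒞₁).trans (le_max_left _ _)

end SplitBound

def IsShadowMinimal (𝒜 : Finset (Finset ℕ)) (k : ℕ) : Prop :=
  (𝒜 : Set (Finset ℕ)).Sized k ∧ #(∂ 𝒜) = minShadow #𝒜 k

lemma max_minShadow_le_card_shadow_union {𝒩 ℳ : Finset (Finset ℕ)} {k : ℕ}
    (h𝒩 : (𝒩 : Set (Finset ℕ)).Sized k) :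
    max (minShadow #𝒩 k) #ℳ ≤ #(∂ 𝒩 ∪ ℳ) :=
  max_le ((minShadow_le_card_shadow h𝒩).trans (card_le_card subset_union_left))
    (card_le_card subset_union_right)

namespace IsShadowMinimal

variable {𝒜 : Finset (Finset ℕ)} {k a : ℕ}

lemma card_shadow_union_add_card_shadow_le (h : IsShadowMinimal 𝒜 (k + 1)) (a : ℕ) :
    #(∂ (𝒜.nonMemberSubfamily a) ∪ 𝒜.memberSubfamily a) + #(∂ (𝒜.memberSubfamily a)) ≤
      max (minShadow #(𝒜.nonMemberSubfamily a) (k + 1)) #(𝒜.memberSubfamily a) +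
        minShadow #(𝒜.memberSubfamily a) k := by
  obtain ⟨𝒩, h𝒩, h𝒩card, h𝒩shadow⟩ :=
    exists_card_shadow_eq_minShadow (h.1.nonMemberSubfamily (a := a))
  obtain ⟨ℳ, hℳ, hℳcard, hℳshadow⟩ :=
    exists_card_shadow_eq_minShadow (h.1.memberSubfamily (a := a))
  have := minShadow_add_le h𝒩 hℳ
  rwa [h𝒩card, hℳcard, h𝒩shadow, hℳshadow, add_comm,
    card_memberSubfamily_add_card_nonMemberSubfamily,
    ← h.2, card_shadow_eq_card_shadow_union_add 𝒜 a] at this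

lemma memberSubfamily (h : IsShadowMinimal 𝒜 (k + 1)) (a : ℕ) :
    IsShadowMinimal (𝒜.memberSubfamily a) k := by
  have hM := h.1.memberSubfamily (a := a)
  have := h.card_shadow_union_add_card_shadow_le a
  have := max_minShadow_le_card_shadow_union (ℳ := 𝒜.memberSubfamily a)
    (h.1.nonMemberSubfamily (a := a))
  have := minShadow_le_card_shadow hM
  exact ⟨hM, by omega⟩

lemma card_shadow_nonMemberSubfamily_union (h : IsShadowMinimal 𝒜 (k + 1)) (a : ℕ) :
    #(∂ (𝒜.nonMemberSubfamily a) ∪ 𝒜.memberSubfamily a) =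
      max (minShadow #(𝒜.nonMemberSubfamily a) (k + 1)) #(𝒜.memberSubfamily a) := by
  have := h.card_shadow_union_add_card_shadow_le a
  have := max_minShadow_le_card_shadow_union (ℳ := 𝒜.memberSubfamily a)
    (h.1.nonMemberSubfamily (a := a))
  have := (h.memberSubfamily a).2
  omega

lemma memberSubfamily_subset_shadow (h : IsShadowMinimal 𝒜 (k + 1))
    (ha : #(𝒜.memberSubfamily a) ≤ minShadow #(𝒜.nonMemberSubfamily a) (k + 1)) :
    𝒜.memberSubfamily a ⊆ ∂ (𝒜.nonMemberSubfamily a) := by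
  have hcard := h.card_shadow_nonMemberSubfamily_union a
  rw [max_eq_left ha] at hcard
  refine union_eq_left.1 (eq_of_subset_of_card_le subset_union_left ?_).symm
  exact hcard.trans_le (minShadow_le_card_shadow (h.1.nonMemberSubfamily (a := a)))

lemma nonMemberSubfamily (h : IsShadowMinimal 𝒜 (k + 1))
    (ha : #(𝒜.memberSubfamily a) ≤ minShadow #(𝒜.nonMemberSubfamily a) (k + 1)) :
    IsShadowMinimal (𝒜.nonMemberSubfamily a) (k + 1) := by
  have hcard := h.card_shadow_nonMemberSubfamily_union a
  rw [max_eq_left ha, union_eq_left.2 (h.memberSubfamily_subset_shadow ha)] at hcard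
  exact ⟨h.1.nonMemberSubfamily, hcard⟩

lemma shadow_subset_memberSubfamily (h : IsShadowMinimal 𝒜 (k + 1))
    (ha : minShadow #(𝒜.nonMemberSubfamily a) (k + 1) < #(𝒜.memberSubfamily a)) :
    ∂ (𝒜.nonMemberSubfamily a) ⊆ 𝒜.memberSubfamily a := by
  have hcard := h.card_shadow_nonMemberSubfamily_union a
  rw [max_eq_right ha.le] at hcard
  exact union_eq_right.1 (eq_of_subset_of_card_le subset_union_right hcard.le).symm

end IsShadowMinimal

lemma eq_powersetCard_sup_of_exchange {α : Type*} [DecidableEq α] {𝒜 : Finset (Finset α)}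
    {k : ℕ} (h𝒜 : (𝒜 : Set (Finset α)).Sized k) (hne : 𝒜.Nonempty)
    (hex : ∀ s ∈ 𝒜, ∀ a ∈ s, ∀ b ∈ 𝒜.sup id, b ∉ s → insert b (s.erase a) ∈ 𝒜) :
    𝒜 = powersetCard k (𝒜.sup id) := by
  ext t
  simp only [mem_powersetCard]
  refine ⟨fun ht => ⟨le_sup (f := id) ht, h𝒜 ht⟩, fun ⟨htV, htk⟩ => ?_⟩
  -- An exchange towards `t` would enlarge the overlap of `t` with a member of maximal overlap.
  obtain ⟨s, hs, hmax⟩ := exists_max_image 𝒜 (fun s => #(t ∩ s)) hne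
  by_contra ht
  have hcard : #s = #t := by rw [h𝒜 hs, htk]
  obtain ⟨b, hbt, hbs⟩ := not_subset.1 fun h => ht (eq_of_subset_of_card_le h hcard.le ▸ hs)
  obtain ⟨a, has, hat⟩ := not_subset.1 fun h => ht (eq_of_subset_of_card_le h hcard.ge ▸ hs)
  have hsub : insert b (t ∩ s) ⊆ t ∩ insert b (s.erase a) := by
    intro x hx
    simp only [mem_insert, mem_inter, mem_erase] at hx ⊢
    grind
  have := (card_le_card hsub).trans (hmax _ (hex s hs a has b (htV hbt) hbs))
  rw [card_insert_of_notMem fun h => hbs (mem_inter.1 h).2] at this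
  omega

namespace IsShadowMinimal

variable {𝒜 : Finset (Finset ℕ)} {k : ℕ}

lemma exists_card_memberSubfamily_le (h : IsShadowMinimal 𝒜 (k + 1)) (h2 : 2 ≤ #𝒜) :
    ∃ a, (𝒜.memberSubfamily a).Nonempty ∧
      #(𝒜.memberSubfamily a) ≤ minShadow #(𝒜.nonMemberSubfamily a) (k + 1) := by
  by_contra! hbad
  set V := 𝒜.sup id
  have hV : ∀ b ∈ V, (𝒜.memberSubfamily b).Nonempty := by
    intro b hb
    obtain ⟨s, hs, hbs⟩ := mem_sup.1 hb
    exact ⟨s.erase b, mem_memberSubfamily.2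
      ⟨by rwa [insert_erase (show b ∈ s from hbs)], notMem_erase _ _⟩⟩
  -- Now `∂ (𝒜.nonMemberSubfamily b) ⊆ 𝒜.memberSubfamily b` for every vertex `b`, so `𝒜` is
  -- closed under exchanges, hence complete.
  have h𝒜V : 𝒜 = powersetCard (k + 1) V := by
    refine eq_powersetCard_sup_of_exchange h.1 (card_pos.1 (by omega))
      fun s hs a has b hb hbs => ?_
    have := h.shadow_subset_memberSubfamily (hbad b (hV b hb))
      (erase_mem_shadow (mem_nonMemberSubfamily.2 ⟨hs, hbs⟩) has)
    exact (mem_memberSubfamily.1 this).1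
  have hkV : k + 1 < #V := by
    by_contra! hle
    rw [h𝒜V, card_powersetCard] at h2
    rcases hle.lt_or_eq with hlt | heq
    · rw [Nat.choose_eq_zero_of_lt hlt] at h2; omega
    · rw [heq, Nat.choose_self] at h2; omega
  obtain ⟨b, hb⟩ : V.Nonempty := card_pos.1 (by omega)
  have := hbad b (hV b hb)
  rw [h𝒜V, nonMemberSubfamily_powersetCard, memberSubfamily_powersetCard hb, card_powersetCard,
    card_powersetCard, card_erase_of_mem hb] at this
  exact this.not_ge (choose_le_minShadow (by omega))

end IsShadowMinimal

section Complex

variable {Δ : Finset (Finset ℕ)} {d x : ℕ} {σ : Finset ℕ}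

lemma mem_facets : σ ∈ facets Δ ↔ σ ∈ Δ ∧ ∀ τ ∈ Δ, σ ⊆ τ → σ = τ := mem_filter

lemma facets_subset : facets Δ ⊆ Δ := filter_subset _ _

lemma exists_mem_facets_superset (hσ : σ ∈ Δ) : ∃ τ ∈ facets Δ, σ ⊆ τ := by
  obtain ⟨τ, hστ, hτ, hmax⟩ := exists_le_maximal Δ hσ
  exact ⟨τ, mem_facets.2 ⟨hτ, fun ρ hρ hτρ => le_antisymm hτρ (hmax hρ hτρ)⟩, hστ⟩

lemma IsComplex.empty_mem (hΔ : IsComplex Δ) : ∅ ∈ Δ :=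
  let ⟨σ, hσ⟩ := hΔ.1
  hΔ.2 σ hσ ∅ (empty_subset σ)

lemma IsComplex.deletion (hΔ : IsComplex Δ) (x : ℕ) : IsComplex (deletion Δ x) :=
  ⟨⟨∅, mem_filter.2 ⟨hΔ.empty_mem, notMem_empty x⟩⟩, fun _ hσ τ hτσ =>
    mem_filter.2 ⟨hΔ.2 _ (mem_filter.1 hσ).1 τ hτσ, fun hx => (mem_filter.1 hσ).2 (hτσ hx)⟩⟩

lemma IsComplex.link (hΔ : IsComplex Δ) (hx : {x} ∈ Δ) : IsComplex (link Δ x) := by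
  refine ⟨⟨∅, mem_filter.2 ⟨hΔ.empty_mem, notMem_empty x, hx⟩⟩, fun σ hσ τ hτσ => ?_⟩
  obtain ⟨hσΔ, hxσ, hxσΔ⟩ := mem_filter.1 hσ
  exact mem_filter.2 ⟨hΔ.2 σ hσΔ τ hτσ, fun hx => hxσ (hτσ hx),
    hΔ.2 _ hxσΔ _ (insert_subset_insert x hτσ)⟩

lemma deletion_ssubset (hσ : σ ∈ Δ) (hx : x ∈ σ) : deletion Δ x ⊂ Δ :=
  filter_ssubset.2 ⟨σ, hσ, not_not.2 hx⟩

lemma link_ssubset (hσ : σ ∈ Δ) (hx : x ∈ σ) : link Δ x ⊂ Δ :=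
  filter_ssubset.2 ⟨σ, hσ, fun h => h.1 hx⟩

lemma IsComplex.filter_card_eq_shadow_facets (hΔ : IsComplex Δ) (hp : IsPureDim Δ d) :
    Δ.filter (fun σ => σ.card = d) = ∂ (facets Δ) := by
  ext τ
  rw [mem_filter, mem_shadow_iff_exists_mem_card_add_one]
  constructor
  · rintro ⟨hτ, rfl⟩
    obtain ⟨σ, hσ, hτσ⟩ := exists_mem_facets_superset hτ
    exact ⟨σ, hσ, hτσ, hp σ hσ⟩
  · rintro ⟨σ, hσ, hτσ, hcard⟩
    exact ⟨hΔ.2 σ (facets_subset hσ) τ hτσ, by have := hp σ hσ; omega⟩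

lemma isExtremal_iff : IsExtremal Δ d ↔ IsComplex Δ ∧ IsShadowMinimal (facets Δ) (d + 1) := by
  constructor
  · rintro ⟨hΔ, hp, hcount⟩
    exact ⟨hΔ, fun σ hσ => hp σ hσ, by rw [← hΔ.filter_card_eq_shadow_facets hp, hcount]⟩
  · rintro ⟨hΔ, hsized, hmin⟩
    have hp : IsPureDim Δ d := fun σ hσ => hsized hσ
    exact ⟨hΔ, hp, by rw [hΔ.filter_card_eq_shadow_facets hp, hmin]⟩

lemma facets_link (hΔ : IsComplex Δ) (x : ℕ) :
    facets (link Δ x) = (facets Δ).memberSubfamily x := by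
  ext τ
  simp only [mem_facets, mem_memberSubfamily, link, mem_filter]
  constructor
  · rintro ⟨⟨hτ, hxτ, hxτΔ⟩, hmax⟩
    refine ⟨⟨hxτΔ, fun ρ hρ hτρ => ?_⟩, hxτ⟩
    have hxρ : x ∈ ρ := hτρ (mem_insert_self x τ)
    have := hmax (ρ.erase x) ⟨hΔ.2 ρ hρ _ (erase_subset x ρ), notMem_erase x ρ,
      by rwa [insert_erase hxρ]⟩ (subset_erase.2 ⟨(subset_insert x τ).trans hτρ, hxτ⟩)
    rw [this, insert_erase hxρ]
  · rintro ⟨⟨hxτΔ, hmax⟩, hxτ⟩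
    refine ⟨⟨hΔ.2 _ hxτΔ τ (subset_insert x τ), hxτ, hxτΔ⟩, fun ρ ⟨_, hxρ, hxρΔ⟩ hτρ => ?_⟩
    have := hmax _ hxρΔ (insert_subset_insert x hτρ)
    rw [← erase_insert hxτ, this, erase_insert hxρ]

lemma facets_deletion
    (hx : (facets Δ).memberSubfamily x ⊆ ∂ ((facets Δ).nonMemberSubfamily x)) :
    facets (deletion Δ x) = (facets Δ).nonMemberSubfamily x := by
  ext σ
  simp only [mem_nonMemberSubfamily, mem_facets, deletion, mem_filter]
  constructor
  · rintro ⟨⟨hσ, hxσ⟩, hmax⟩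
    obtain ⟨ρ, hρ, hσρ⟩ := exists_mem_facets_superset hσ
    by_cases hxρ : x ∈ ρ
    · -- `ρ` minus `x` lies in a facet `π` avoiding `x`, and `π` contains `σ`.
      have : ρ.erase x ∈ (facets Δ).memberSubfamily x :=
        mem_memberSubfamily.2 ⟨by rwa [insert_erase hxρ], notMem_erase x ρ⟩
      obtain ⟨π, hπ, hρπ⟩ := exists_subset_of_mem_shadow (hx this)
      obtain ⟨hπ, hxπ⟩ := mem_nonMemberSubfamily.1 hπ
      have hσπ : σ ⊆ π := (subset_erase.2 ⟨hσρ, hxσ⟩).trans hρπ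
      rw [hmax π ⟨facets_subset hπ, hxπ⟩ hσπ]
      exact ⟨mem_facets.1 hπ, hxπ⟩
    · rw [hmax ρ ⟨facets_subset hρ, hxρ⟩ hσρ]
      exact ⟨mem_facets.1 hρ, hxρ⟩
  · rintro ⟨⟨hσ, hmax⟩, hxσ⟩
    exact ⟨⟨hσ, hxσ⟩, fun ρ hρ => hmax ρ hρ.1⟩

end Complex

section Shelling

variable {α : Type*} [DecidableEq α] {𝒜 ℬ 𝒟 ℳ : Finset (Finset α)} {G : Finset α} {a : α}

def IsShellingStep (𝒜 : Finset (Finset α)) (G : Finset α) : Prop :=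
  ∀ A ∈ 𝒜, ∃ B ∈ 𝒜, #(G ∩ B) = #G - 1 ∧ G ∩ A ⊆ G ∩ B

inductive IsShellableFamily : Finset (Finset α) → Prop
  | empty : IsShellableFamily ∅
  | step {𝒜 : Finset (Finset α)} {G : Finset α} :
      IsShellableFamily 𝒜 → G ∉ 𝒜 → IsShellingStep 𝒜 G → IsShellableFamily (insert G 𝒜)

lemma isShellableFamily_of_pairwise (h : ∀ A ∈ 𝒜, ∀ B ∈ 𝒜, A ≠ B → #(A ∩ B) = #A - 1) :
    IsShellableFamily 𝒜 := by
  induction 𝒜 using Finset.induction_on with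
  | empty => exact .empty
  | insert G 𝒜 hG ih =>
    refine .step (ih fun A hA B hB => h A (mem_insert_of_mem hA) B (mem_insert_of_mem hB)) hG
      fun A hA => ⟨A, hA, h G (mem_insert_self G 𝒜) A (mem_insert_of_mem hA) ?_, subset_rfl⟩
    rintro rfl
    exact hG hA

lemma isShellableFamily_of_card_le_one (h : #𝒜 ≤ 1) : IsShellableFamily 𝒜 :=
  isShellableFamily_of_pairwise fun A hA B hB hAB => absurd (card_le_one.1 h A hA B hB) hAB

lemma isShellableFamily_of_sized_one (h : (𝒜 : Set (Finset α)).Sized 1) :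
    IsShellableFamily 𝒜 := by
  refine isShellableFamily_of_pairwise fun A hA B hB hAB => ?_
  obtain ⟨a, rfl⟩ := card_eq_one.1 (h hA)
  obtain ⟨b, rfl⟩ := card_eq_one.1 (h hB)
  rw [singleton_inter_of_notMem (by simpa [eq_comm] using hAB), card_empty, card_singleton]

lemma IsShellingStep.union_image_insert (h : IsShellingStep ℬ G) (hG : G.Nonempty)
    (hG𝒟 : G ∈ ∂ 𝒟) (h𝒟 : ∀ A ∈ 𝒟, a ∉ A) (haG : a ∉ G) :
    IsShellingStep (𝒟 ∪ ℬ.image (insert a)) (insert a G) := by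
  have hcard : #(insert a G) - 1 = #G := by rw [card_insert_of_notMem haG, Nat.add_sub_cancel]
  intro A hA
  rcases mem_union.1 hA with hA | hA
  · -- a facet of `𝒟` through `G` meets `insert a G` exactly in `G`
    obtain ⟨B, hB, hGB, -⟩ := mem_shadow_iff_exists_mem_card_add_one.1 hG𝒟
    refine ⟨B, mem_union_left _ hB, ?_, ?_⟩
    · rw [insert_inter_of_notMem (h𝒟 B hB), inter_eq_left.2 hGB, hcard]
    · rw [insert_inter_of_notMem (h𝒟 A hA), insert_inter_of_notMem (h𝒟 B hB),
        inter_eq_left.2 hGB]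
      exact inter_subset_left
  · obtain ⟨A, hAℬ, rfl⟩ := mem_image.1 hA
    obtain ⟨B, hB, hcardB, hAB⟩ := h A hAℬ
    refine ⟨insert a B, mem_union_right _ (mem_image_of_mem _ hB), ?_, ?_⟩
    · rw [← insert_inter_distrib, card_insert_of_notMem fun h => haG (mem_inter.1 h).1, hcardB,
        hcard, Nat.sub_add_cancel hG.card_pos]
    · rw [← insert_inter_distrib, ← insert_inter_distrib]
      exact insert_subset_insert a hAB


lemma IsShellableFamily.union_image_insert (h𝒟 : IsShellableFamily 𝒟)
    (hℳ : IsShellableFamily ℳ) (hℳ𝒟 : ℳ ⊆ ∂ 𝒟) (ha𝒟 : ∀ A ∈ 𝒟, a ∉ A)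
    (haℳ : ∀ G ∈ ℳ, a ∉ G ∧ G.Nonempty) :
    IsShellableFamily (𝒟 ∪ ℳ.image (insert a)) := by
  induction hℳ with
  | empty => simpa using h𝒟
  | @step ℳ G _ hG hstep ih =>
    have haG := haℳ G (mem_insert_self G ℳ)
    rw [image_insert, union_insert]
    refine .step
      (ih ((subset_insert G ℳ).trans hℳ𝒟) fun G' hG' => haℳ G' (mem_insert_of_mem hG'))
      ?_ (hstep.union_image_insert haG.2 (hℳ𝒟 (mem_insert_self G ℳ)) ha𝒟 haG.1)
    rw [mem_union, mem_image, not_or, not_exists]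
    refine ⟨fun h => ha𝒟 _ h (mem_insert_self a G), fun G' ⟨hG', hGG'⟩ => hG ?_⟩
    rwa [← erase_insert haG.1, ← hGG', erase_insert (haℳ G' (mem_insert_of_mem hG')).1]

lemma IsShellableFamily.exists_shelling (h : IsShellableFamily 𝒜) :
    ∃ (n : ℕ) (F : ℕ → Finset α), 𝒜 = (range n).image F ∧
      (∀ i < n, ∀ j < n, F i = F j → i = j) ∧
      ∀ j, 1 ≤ j → j < n → ∀ i < j, ∃ i' < j,
        (F j ∩ F i').card = (F j).card - 1 ∧ F j ∩ F i ⊆ F j ∩ F i' := by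
  induction h with
  | empty => exact ⟨0, fun _ => ∅, by simp, by simp, fun j _ hj => by omega⟩
  | @step 𝒜 G _ hG hstep ih =>
    obtain ⟨n, F, rfl, hinj, hshell⟩ := ih
    set F' := Function.update F n G
    have hF' : ∀ i < n, F' i = F i := fun i hi => Function.update_of_ne hi.ne _ _
    have hF'n : F' n = G := Function.update_self n G F
    have hG' : ∀ i < n, F i ≠ G := fun i hi h => hG (h ▸ mem_image_of_mem F (mem_range.2 hi))
    refine ⟨n + 1, F', ?_, ?_, ?_⟩
    · rw [range_add_one, image_insert, hF'n,
        image_congr fun i hi => hF' i (mem_range.1 hi)]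
    · intro i hi j hj hij
      rcases (Nat.lt_succ_iff.1 hi).lt_or_eq with hi | rfl <;>
        rcases (Nat.lt_succ_iff.1 hj).lt_or_eq with hj | rfl
      · rw [hF' i hi, hF' j hj] at hij
        exact hinj i hi j hj hij
      · rw [hF' i hi, hF'n] at hij
        exact absurd hij (hG' i hi)
      · rw [hF' j hj, hF'n] at hij
        exact absurd hij.symm (hG' j hj)
      · rfl
    · intro j hj1 hj i hij
      rcases (Nat.lt_succ_iff.1 hj).lt_or_eq with hj | rfl
      · obtain ⟨i', hi', h⟩ := hshell j hj1 hj i hij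
        exact ⟨i', hi', by rwa [hF' j hj, hF' i' (hi'.trans hj), hF' i (hij.trans hj)]⟩
      · obtain ⟨_, hB, h⟩ := hstep (F i) (mem_image_of_mem F (mem_range.2 hij))
        obtain ⟨i', hi', rfl⟩ := mem_image.1 hB
        rw [mem_range] at hi'
        exact ⟨i', hi', by rwa [hF'n, hF' i' hi', hF' i hij]⟩

end Shelling

theorem IsExtremal.isShellableFamily_facets {Δ : Finset (Finset ℕ)} {d : ℕ}
    (h : IsExtremal Δ d) : IsShellableFamily (facets Δ) := by
  induction Δ using Finset.strongInduction generalizing d with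
  | H Δ ih =>
  obtain ⟨hΔ, hmin⟩ := isExtremal_iff.1 h
  rcases d with _ | e
  · exact isShellableFamily_of_sized_one hmin.1
  rcases le_or_gt #(facets Δ) 1 with h1 | h2
  · exact isShellableFamily_of_card_le_one h1
  obtain ⟨x, ⟨G, hG⟩, hgood⟩ := hmin.exists_card_memberSubfamily_le h2
  have hMN := hmin.memberSubfamily_subset_shadow hgood
  have hN := hmin.nonMemberSubfamily hgood
  have hM := hmin.memberSubfamily x
  have hσ : insert x G ∈ Δ := facets_subset (mem_memberSubfamily.1 hG).1
  have hlink := ih _ (link_ssubset hσ (mem_insert_self x G)) (isExtremal_iff.2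
    ⟨hΔ.link (hΔ.2 _ hσ _ (by simp)), (facets_link hΔ x).symm ▸ hM⟩)
  have hdel := ih _ (deletion_ssubset hσ (mem_insert_self x G)) (isExtremal_iff.2
    ⟨hΔ.deletion x, (facets_deletion hMN).symm ▸ hN⟩)
  rw [facets_link hΔ x] at hlink
  rw [facets_deletion hMN] at hdel
  rw [← nonMemberSubfamily_union_image_insert_memberSubfamily (facets Δ) x]
  exact hdel.union_image_insert hlink hMN (fun A hA => (mem_nonMemberSubfamily.1 hA).2)
    fun G hG => ⟨(mem_memberSubfamily.1 hG).2, card_pos.1 (by rw [hM.1 hG]; omega)⟩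

/-- Every extremal pure simplicial complex is shellable. -/
theorem extremal_shellable (Δ : Finset (Finset ℕ)) (d : ℕ)
    (h : IsExtremal Δ d) : IsShellable Δ :=
  h.isShellableFamily_facets.exists_shelling
end

section
/- Let U be a finite family of n distinct k-element sets (k ≥ 1, n ≥ 1), let V = ⋃_{A∈U} A, and for i ∈ V set B_i = {A ∈ U : i ∉ A} and C_i = {A∖{i} : i ∈ A ∈ U}. Then either there exists i ∈ V such that |∂B_i| > |C_i|, or U consists of all k-element subsets of V. (Lemma 2.1.) -/
/-!
For `T` in the shadow of `U`, let `N(T)` be the set of `z ∈ V \ T` with `insert z T ∈ U`.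
Double counting the pairs `(i, T)` gives `∑ᵢ |Cᵢ| = ∑_T |N(T)|` and
`∑ᵢ |∂Bᵢ| = ∑_T |{i ∈ V \ T : N(T) ⊄ {i}}|`. When `|V| ≥ k + 2`, each `T` contributes at
least as much to the second sum as to the first, and strictly more unless `N(T) = V \ T`.
So if `|∂Bᵢ| ≤ |Cᵢ|` for all `i`, then `U` is closed under exchanging one element for any
other element of `V`, and such a family is all of `powersetCard k V`. The cases `|V| = k`
and `|V| = k + 1` are checked directly: in the latter, for `i ∉ A₀ ∈ U` the family
`Bᵢ = {A₀}` has a shadow of size `k`, while `|Cᵢ| ≤ |U| - 1 ≤ k - 1` unless `U` is complete.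
-/

open Finset
open scoped FinsetFamily

section

variable {α : Type*} [DecidableEq α]

lemma card_shadow_singleton (s : Finset α) : #(∂ ({s} : Finset (Finset α))) = #s := by
  have : ∂ ({s} : Finset (Finset α)) = s.image s.erase := by
    ext t
    simp [mem_shadow_iff, eq_comm]
  rw [this, card_image_of_injOn s.erase_injOn]

lemma filter_exists_ne_of_one_lt_card {N : Finset α} (S : Finset α) (hN : 1 < #N) :
    S.filter (fun i => ∃ a ∈ N, a ≠ i) = S := by
  refine filter_true_of_mem fun i _ => ?_
  obtain ⟨a, ha, b, hb, hab⟩ := one_lt_card.mp hN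
  rcases eq_or_ne a i with rfl | hai
  · exact ⟨b, hb, Ne.symm hab⟩
  · exact ⟨a, ha, hai⟩

lemma filter_exists_ne_singleton (S : Finset α) (b : α) :
    S.filter (fun i => ∃ a ∈ ({b} : Finset α), a ≠ i) = S.erase b := by
  ext i
  simp [eq_comm, and_comm]

lemma card_le_card_filter_exists_ne {N S : Finset α} (hNS : N ⊆ S) (hN : N.Nonempty)
    (hS : 2 ≤ #S) : #N ≤ #(S.filter fun i => ∃ a ∈ N, a ≠ i) := by
  obtain ⟨b, rfl⟩ | hN := hN.exists_eq_singleton_or_nontrivial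
  · rw [filter_exists_ne_singleton, card_erase_of_mem (hNS (mem_singleton_self b)),
      card_singleton]
    omega
  · rw [filter_exists_ne_of_one_lt_card S (one_lt_card_iff_nontrivial.mpr hN)]
    exact card_le_card hNS

lemma card_lt_card_filter_exists_ne {N S : Finset α} (hNS : N ⊆ S) (hN : N.Nonempty)
    (hS : 3 ≤ #S) (hne : N ≠ S) : #N < #(S.filter fun i => ∃ a ∈ N, a ≠ i) := by
  obtain ⟨b, rfl⟩ | hN := hN.exists_eq_singleton_or_nontrivial
  · rw [filter_exists_ne_singleton, card_erase_of_mem (hNS (mem_singleton_self b)),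
      card_singleton]
    omega
  · rw [filter_exists_ne_of_one_lt_card S (one_lt_card_iff_nontrivial.mpr hN)]
    exact card_lt_card (ssubset_of_subset_of_ne hNS hne)

variable {U : Finset (Finset α)} {V T : Finset α} {i : α}

def extensions (U : Finset (Finset α)) (V T : Finset α) : Finset α :=
  (V \ T).filter (insert · T ∈ U)

lemma mem_extensions {z : α} :
    z ∈ extensions U V T ↔ z ∈ V ∧ z ∉ T ∧ insert z T ∈ U := by
  simp [extensions, and_assoc]

lemma extensions_subset : extensions U V T ⊆ V \ T :=
  filter_subset _ _

lemma extensions_nonempty (hUV : ∀ A ∈ U, A ⊆ V) (hT : T ∈ ∂ U) :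
    (extensions U V T).Nonempty := by
  obtain ⟨a, haT, haU⟩ := mem_shadow_iff_insert_mem.mp hT
  exact ⟨a, mem_extensions.mpr ⟨hUV _ haU (mem_insert_self a T), haT, haU⟩⟩

lemma image_erase_filter_mem_eq (hi : i ∈ V) :
    ((U.filter fun A => i ∈ A).image fun A => A.erase i) =
      (∂ U).filter (i ∈ extensions U V ·) := by
  ext T
  simp only [mem_image, mem_filter, mem_extensions]
  constructor
  · rintro ⟨A, ⟨hAU, hiA⟩, rfl⟩
    exact ⟨erase_mem_shadow hAU hiA, hi, notMem_erase i A, by rwa [insert_erase hiA]⟩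
  · rintro ⟨-, -, hiT, hiTU⟩
    exact ⟨insert i T, ⟨hiTU, mem_insert_self i T⟩, erase_insert hiT⟩

lemma shadow_filter_notMem_eq (hUV : ∀ A ∈ U, A ⊆ V) :
    ∂ (U.filter fun A => i ∉ A) =
      (∂ U).filter (fun T => i ∉ T ∧ ∃ a ∈ extensions U V T, a ≠ i) := by
  ext T
  simp only [mem_filter, mem_shadow_iff_insert_mem, mem_extensions, mem_insert, not_or]
  constructor
  · rintro ⟨a, haT, haU, hia, hiT⟩
    exact ⟨⟨a, haT, haU⟩, hiT, a, ⟨hUV _ haU (mem_insert_self a T), haT, haU⟩,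
      Ne.symm hia⟩
  · rintro ⟨-, hiT, a, ⟨-, haT, haU⟩, hai⟩
    exact ⟨a, haT, haU, Ne.symm hai, hiT⟩

lemma sum_card_image_erase_filter_mem :
    ∑ i ∈ V, #((U.filter fun A => i ∈ A).image fun A => A.erase i) =
      ∑ T ∈ ∂ U, #(extensions U V T) := by
  rw [sum_congr rfl fun i hi => by rw [image_erase_filter_mem_eq hi]]
  refine (sum_card_bipartiteAbove_eq_sum_card_bipartiteBelow _).trans (sum_congr rfl fun T _ => ?_)
  rw [bipartiteBelow, filter_mem_eq_inter,
    inter_eq_right.mpr (extensions_subset.trans sdiff_subset)]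

lemma sum_card_shadow_filter_notMem (hUV : ∀ A ∈ U, A ⊆ V) :
    ∑ i ∈ V, #(∂ (U.filter fun A => i ∉ A)) =
      ∑ T ∈ ∂ U, #((V \ T).filter fun i => ∃ a ∈ extensions U V T, a ≠ i) := by
  rw [sum_congr rfl fun i _ => by rw [shadow_filter_notMem_eq hUV]]
  refine (sum_card_bipartiteAbove_eq_sum_card_bipartiteBelow _).trans (sum_congr rfl fun T _ => ?_)
  rw [bipartiteBelow, sdiff_eq_filter, filter_filter]

lemma extensions_eq_sdiff_of_forall_card_shadow_le {k : ℕ} (hUk : ∀ A ∈ U, #A = k)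
    (hUV : ∀ A ∈ U, A ⊆ V) (hV : k + 2 ≤ #V)
    (h : ∀ i ∈ V, #(∂ (U.filter fun A => i ∉ A)) ≤
      #((U.filter fun A => i ∈ A).image fun A => A.erase i)) :
    ∀ T ∈ ∂ U, extensions U V T = V \ T := by
  have hsize : ∀ T ∈ ∂ U, 3 ≤ #(V \ T) := by
    intro T hT
    obtain ⟨A, hA, a, haA, rfl⟩ := mem_shadow_iff.mp hT
    have hk : 0 < k := hUk A hA ▸ card_pos.mpr ⟨a, haA⟩
    rw [card_sdiff_of_subset ((erase_subset a A).trans (hUV A hA)), card_erase_of_mem haA,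
      hUk A hA]
    omega
  have hle : ∀ T ∈ ∂ U, #(extensions U V T) ≤
      #((V \ T).filter fun i => ∃ a ∈ extensions U V T, a ≠ i) := fun T hT =>
    card_le_card_filter_exists_ne extensions_subset (extensions_nonempty hUV hT)
      (Nat.le_of_succ_le (hsize T hT))
  have hsum : ∑ T ∈ ∂ U, #(extensions U V T) =
      ∑ T ∈ ∂ U, #((V \ T).filter fun i => ∃ a ∈ extensions U V T, a ≠ i) := by
    refine le_antisymm (sum_le_sum hle) ?_
    rw [← sum_card_shadow_filter_notMem hUV, ← sum_card_image_erase_filter_mem]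
    exact sum_le_sum h
  intro T hT
  by_contra hne
  exact ((sum_eq_sum_iff_of_le hle).mp hsum T hT).not_lt <|
    card_lt_card_filter_exists_ne extensions_subset (extensions_nonempty hUV hT) (hsize T hT) hne

lemma eq_powersetCard_of_forall_insert_mem {k : ℕ} (hU : U.Nonempty)
    (hsub : U ⊆ powersetCard k V) (h : ∀ T ∈ ∂ U, ∀ z ∈ V \ T, insert z T ∈ U) :
    U = powersetCard k V := by
  refine hsub.antisymm fun S hS => ?_
  obtain ⟨hSV, hSk⟩ := mem_powersetCard.mp hS
  obtain ⟨A, hA, hAmax⟩ := exists_max_image U (fun A => #(A ∩ S)) hU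
  have hAk : #A = k := (mem_powersetCard.mp (hsub hA)).2
  by_contra hSU
  obtain ⟨j, hjA, hjS⟩ : ∃ j ∈ A, j ∉ S := not_subset.mp fun hAS =>
    hSU (eq_of_subset_of_card_le hAS (by rw [hSk, hAk]) ▸ hA)
  obtain ⟨i, hiS, hiA⟩ : ∃ i ∈ S, i ∉ A := not_subset.mp fun hSA =>
    hSU ((eq_of_subset_of_card_le hSA (by rw [hSk, hAk])).symm ▸ hA)
  have hswap : insert i (A.erase j) ∈ U :=
    h _ (erase_mem_shadow hA hjA) i (mem_sdiff.mpr ⟨hSV hiS, fun h => hiA (mem_of_mem_erase h)⟩)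
  have hcard : #(insert i (A.erase j) ∩ S) = #(A ∩ S) + 1 := by
    rw [insert_inter_of_mem hiS, erase_inter, erase_eq_of_notMem (by simp [hjS]),
      card_insert_of_notMem (by simp [hiA])]
  linarith [hAmax _ hswap]

lemma exists_card_image_erase_lt_card_shadow_of_card_eq_succ {k : ℕ} (hUk : ∀ A ∈ U, #A = k)
    (hUV : ∀ A ∈ U, A ⊆ V) (hV : #V = k + 1) (hU : U.Nonempty)
    (hne : U ≠ powersetCard k V) :
    ∃ i ∈ V, #((U.filter fun A => i ∈ A).image fun A => A.erase i) <
      #(∂ (U.filter fun A => i ∉ A)) := by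
  obtain ⟨A₀, hA₀⟩ := hU
  obtain ⟨i, hiV, hiA₀⟩ : ∃ i ∈ V, i ∉ A₀ := not_subset.mp fun hVA =>
    by have := card_le_card hVA; rw [hUk A₀ hA₀] at this; omega
  have hB : (U.filter fun A => i ∉ A) = {A₀} := by
    have hmissing : ∀ A ∈ U, i ∉ A → A = V.erase i := fun A hA hiA =>
      eq_of_subset_of_card_le (subset_erase.mpr ⟨hUV A hA, hiA⟩)
        (by rw [card_erase_of_mem hiV, hV, hUk A hA]; rfl)
    refine eq_singleton_iff_unique_mem.mpr ⟨mem_filter.mpr ⟨hA₀, hiA₀⟩, fun A hA => ?_⟩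
    obtain ⟨hAU, hiA⟩ := mem_filter.mp hA
    rw [hmissing A hAU hiA, hmissing A₀ hA₀ hiA₀]
  have hUlt : #U < k + 1 := by
    have hsub : U ⊆ powersetCard k V := fun A hA => mem_powersetCard.mpr ⟨hUV A hA, hUk A hA⟩
    have := card_lt_card (hsub.ssubset_of_ne hne)
    rwa [card_powersetCard, hV, Nat.choose_succ_self_right] at this
  refine ⟨i, hiV, ?_⟩
  have hC := card_image_le (s := U.filter fun A => i ∈ A) (f := fun A => A.erase i)
  have hsplit := card_filter_add_card_filter_not (s := U) (fun A => i ∈ A)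
  rw [hB, card_singleton] at hsplit
  rw [hB, card_shadow_singleton, hUk A₀ hA₀]
  omega

end

theorem lemma_two_one_general (n k : ℕ) (hn : 1 ≤ n)
    (U : Finset (Finset ℕ)) (hUn : U.card = n) (hUk : ∀ A ∈ U, A.card = k) :
    (∃ i ∈ U.sup id,
      ((U.filter fun A => i ∈ A).image fun A => A.erase i).card <
        (Finset.shadow (U.filter fun A => i ∉ A)).card) ∨
    U = Finset.powersetCard k (U.sup id) := by
  set V := U.sup id
  have hUV : ∀ A ∈ U, A ⊆ V := fun A hA => le_sup (f := id) hA
  have hU : U.Nonempty := card_pos.mp (by omega)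
  have hsub : U ⊆ powersetCard k V := fun A hA => mem_powersetCard.mpr ⟨hUV A hA, hUk A hA⟩
  rw [or_iff_not_imp_left]
  intro h
  push Not at h
  obtain ⟨A, hA⟩ := id hU
  have hkV : k ≤ #V := hUk A hA ▸ card_le_card (hUV A hA)
  obtain hV | hV | hV : #V = k ∨ #V = k + 1 ∨ k + 2 ≤ #V := by omega
  · refine eq_of_subset_of_card_le hsub ?_
    rw [card_powersetCard, hV, Nat.choose_self]
    exact card_pos.mpr hU
  · by_contra hne
    obtain ⟨i, hiV, hlt⟩ :=
      exists_card_image_erase_lt_card_shadow_of_card_eq_succ hUk hUV hV hU hne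
    exact (h i hiV).not_gt hlt
  · refine eq_powersetCard_of_forall_insert_mem hU hsub fun T hT z hz => ?_
    rw [← extensions_eq_sdiff_of_forall_card_shadow_le hUk hUV hV h T hT] at hz
    exact (mem_extensions.mp hz).2.2

/-- **Lemma 2.1.** For a family `U` of `n` distinct `k`-element sets with underlying
set `V = ⋃_{A ∈ U} A`, `B i = {A ∈ U : i ∉ A}` and `C i = {A \ {i} : i ∈ A ∈ U}`:
either there is `i ∈ V` with `|∂(B i)| > |C i|`, or `U` consists of all `k`-element
subsets of `V`. -/
theorem lemma_two_one (n k : ℕ) (hk : 1 ≤ k) (hn : 1 ≤ n)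
    (U : Finset (Finset ℕ)) (hUn : U.card = n) (hUk : ∀ A ∈ U, A.card = k) :
    (∃ i ∈ U.sup id,
      ((U.filter fun A => i ∈ A).image fun A => A.erase i).card <
        (Finset.shadow (U.filter fun A => i ∉ A)).card) ∨
    U = Finset.powersetCard k (U.sup id) :=
  lemma_two_one_general n k hn U hUn hUk
end

section
/- (Kruskal–Katona) For positive integers n, k and any family U of n distinct k-element sets, |∂U| ≥ |∂S_k(n)|, where S_k(n) is the set of the first n k-element subsets of ℕ in the squashed order. -/
/-!
The squashed order is the colex order `Finset.Colex`, and all sets of two given finite families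
lie in `{0, …, N - 1}` for some `N`. Pulling the families back along `Fin N ↪ ℕ`, which preserves
sizes, shadows and the colex order, reduces the statement to Mathlib's Kruskal–Katona theorem
on `Fin N` (proved there by UV-compression).
-/

open Finset
open scoped FinsetFamily

/-- The squashed (colexicographic) order on finite subsets of `ℕ`:
`A < B` iff `max (A ∖ B) < max (B ∖ A)`. -/
def SquashedLT (A B : Finset ℕ) : Prop :=
  (A \ B).max < (B \ A).max

/-- `S` is the family of the first `n` `k`-element subsets of `ℕ` in the squashed
order: it has `n` members, all of size `k`, and is downward closed in the squashed
order among `k`-element sets. -/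
def IsSquashedInitSeg (k n : ℕ) (S : Finset (Finset ℕ)) : Prop :=
  S.card = n ∧ (∀ A ∈ S, A.card = k) ∧
  ∀ A ∈ S, ∀ B : Finset ℕ, B.card = k → SquashedLT B A → B ∈ S

/-- `S` is the family of the first `n` `k`-element subsets of `ℕ` not containing `i`,
in the squashed order. -/
def IsSquashedInitSegAvoiding (i k n : ℕ) (S : Finset (Finset ℕ)) : Prop :=
  S.card = n ∧ (∀ A ∈ S, A.card = k ∧ i ∉ A) ∧
  ∀ A ∈ S, ∀ B : Finset ℕ, B.card = k → i ∉ B → SquashedLT B A → B ∈ S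

lemma squashedLT_iff_toColex_lt {A B : Finset ℕ} :
    SquashedLT A B ↔ toColex A < toColex B := by
  rw [Colex.toColex_lt_toColex_iff_exists_forall_lt, SquashedLT]
  constructor
  · intro h
    cases hBA : (B \ A).max with
    | bot => exact absurd (hBA ▸ h) not_lt_bot
    | coe a =>
      obtain ⟨haB, haA⟩ := mem_sdiff.1 (mem_of_max hBA)
      refine ⟨a, haB, haA, fun b hbA hbB => WithBot.coe_lt_coe.1 ?_⟩
      exact (le_max (mem_sdiff.2 ⟨hbA, hbB⟩)).trans_lt (hBA ▸ h)
  · rintro ⟨a, haB, haA, h⟩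
    calc (A \ B).max < a := by
          rw [max_eq_sup_coe]
          exact (Finset.sup_lt_iff (WithBot.bot_lt_coe a)).2 fun b hb =>
            WithBot.coe_lt_coe.2 (h b (mem_sdiff.1 hb).1 (mem_sdiff.1 hb).2)
      _ ≤ (B \ A).max := le_max (mem_sdiff.2 ⟨haB, haA⟩)

lemma IsSquashedInitSeg.isInitSeg {k n : ℕ} {S : Finset (Finset ℕ)}
    (hS : IsSquashedInitSeg k n S) : Colex.IsInitSeg S k :=
  ⟨hS.2.1, fun _ t hs ⟨hts, ht⟩ => hS.2.2 _ hs t ht (squashedLT_iff_toColex_lt.2 hts)⟩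

namespace Finset

variable {α β : Type*}

lemma shadow_image_map [DecidableEq α] [DecidableEq β] (f : α ↪ β) (𝒜 : Finset (Finset α)) :
    ∂ (𝒜.image (map f)) = (∂ 𝒜).image (map f) := by
  ext t
  simp only [mem_shadow_iff, mem_image]
  constructor
  · rintro ⟨_, ⟨s, hs, rfl⟩, b, hb, rfl⟩
    obtain ⟨a, ha, rfl⟩ := mem_map.1 hb
    exact ⟨s.erase a, ⟨s, hs, a, ha, rfl⟩, map_erase f s a⟩
  · rintro ⟨_, ⟨s, hs, a, ha, rfl⟩, rfl⟩
    exact ⟨s.map f, ⟨s, hs, rfl⟩, f a, mem_map_of_mem f ha, (map_erase f s a).symm⟩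

lemma card_shadow_image_map [DecidableEq α] [DecidableEq β] (f : α ↪ β)
    (𝒜 : Finset (Finset α)) : #(∂ (𝒜.image (map f))) = #(∂ 𝒜) := by
  rw [shadow_image_map, card_image_of_injective _ (map_injective f)]

lemma _root_.Set.Sized.of_image_map [DecidableEq β] {f : α ↪ β} {𝒜 : Finset (Finset α)}
    {r : ℕ} (h : ((𝒜.image (map f) : Finset (Finset β)) : Set (Finset β)).Sized r) :
    (𝒜 : Set (Finset α)).Sized r := fun s hs => by
  simpa using h (mem_image_of_mem (map f) hs)

lemma Colex.IsInitSeg.of_image_map [LinearOrder α] [LinearOrder β] {f : α ↪ β}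
    (hf : StrictMono f) {𝒞 : Finset (Finset α)} {r : ℕ}
    (h : Colex.IsInitSeg (𝒞.image (map f)) r) : Colex.IsInitSeg 𝒞 r := by
  refine ⟨h.1.of_image_map, fun s t hs ⟨hts, ht⟩ => ?_⟩
  have hlt : toColex (t.map f) < toColex (s.map f) := by
    simpa only [map_eq_image] using (Colex.toColex_image_lt_toColex_image hf).2 hts
  obtain ⟨u, hu, hut⟩ := mem_image.1 <|
    h.2 (mem_image_of_mem _ hs) ⟨hlt, by rw [card_map, ht]⟩
  exact map_injective _ hut ▸ hu

lemma exists_image_map_valEmbedding {N : ℕ} {𝒜 : Finset (Finset ℕ)}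
    (h𝒜 : ∀ s ∈ 𝒜, s ⊆ range N) :
    ∃ 𝒜' : Finset (Finset (Fin N)), 𝒜'.image (map Fin.valEmbedding) = 𝒜 := by
  obtain ⟨𝒜', -, h⟩ := subset_image_iff.1 fun (s : Finset ℕ) hs =>
    mem_image.2 ⟨s.attachFin fun m hm => mem_range.1 (h𝒜 s hs hm), mem_univ _,
      map_valEmbedding_attachFin _⟩
  exact ⟨𝒜', h⟩

theorem kruskal_katona_nat {r : ℕ} {𝒜 𝒞 : Finset (Finset ℕ)}
    (h𝒜r : (𝒜 : Set (Finset ℕ)).Sized r) (h𝒞𝒜 : #𝒞 ≤ #𝒜) (h𝒞 : Colex.IsInitSeg 𝒞 r) :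
    #(∂ 𝒞) ≤ #(∂ 𝒜) := by
  obtain ⟨N, hN⟩ := exists_nat_subset_range ((𝒜 ∪ 𝒞).sup id)
  have hbound {ℬ} (hℬ : ℬ ⊆ 𝒜 ∪ 𝒞) : ∀ s ∈ ℬ, s ⊆ range N :=
    fun s hs => (le_sup (f := id) (hℬ hs)).trans hN
  obtain ⟨𝒜', rfl⟩ := exists_image_map_valEmbedding (hbound subset_union_left)
  obtain ⟨𝒞', rfl⟩ := exists_image_map_valEmbedding (hbound subset_union_right)
  rw [card_shadow_image_map, card_shadow_image_map]
  rw [card_image_of_injective _ (map_injective _),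
    card_image_of_injective _ (map_injective _)] at h𝒞𝒜
  exact kruskal_katona h𝒜r.of_image_map h𝒞𝒜 (h𝒞.of_image_map Fin.val_strictMono)

end Finset

theorem kruskal_katona_general (n k : ℕ)
    (U : Finset (Finset ℕ)) (hUn : U.card = n) (hUk : ∀ A ∈ U, A.card = k)
    (S : Finset (Finset ℕ)) (hS : IsSquashedInitSeg k n S) :
    (Finset.shadow S).card ≤ (Finset.shadow U).card :=
  kruskal_katona_nat hUk (hS.1.trans hUn.symm).le hS.isInitSeg

/-- **Kruskal–Katona theorem.** For positive integers `n, k` and any family `U` of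
`n` distinct `k`-element sets, `|∂U| ≥ |∂(S_k(n))|`, where `S_k(n)` is the family of
the first `n` `k`-element subsets of `ℕ` in the squashed order. -/
theorem kruskal_katona (n k : ℕ) (hn : 0 < n) (hk : 0 < k)
    (U : Finset (Finset ℕ)) (hUn : U.card = n) (hUk : ∀ A ∈ U, A.card = k)
    (S : Finset (Finset ℕ)) (hS : IsSquashedInitSeg k n S) :
    (Finset.shadow S).card ≤ (Finset.shadow U).card :=
  kruskal_katona_general n k U hUn hUk S hS
end

section
/- Let U be a finite family of n distinct k-element sets (k ≥ 1), let V = ⋃_{A∈U} A with |V| > k, and for i ∈ V set B_i = {A ∈ U : i ∉ A}. Then Σ_{i∈V} |∂B_i| ≥ k·n. (Counting inequality used in the proof of Lemma 2.1: each A ∈ U contributes k distinct sets of its boundary to ∂B_i for every i ∉ A, and each (k-1)-set in ∂B_i arises from at most |V|−k members of U.) -/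
/-!
Each `(k-1)`-set of `∂(B i)` extends to a member of `B i` only by a point of `V \ {i}`, so
local LYM on the ground set `V \ {i}` gives `k |B i| ≤ (|V| - k) |∂(B i)|`; summing over `i`, the
left-hand sides add up to `k n (|V| - k)` since every member of `U` misses `|V| - k` points of `V`.
-/

open Finset

open scoped FinsetFamily

namespace Finset

variable {α : Type*} [DecidableEq α]

theorem card_filter_superset_le_card_sdiff {𝒜 : Finset (Finset α)} {W S : Finset α} {r : ℕ}
    (h𝒜 : (𝒜 : Set (Finset α)).Sized r) (hW : ∀ A ∈ 𝒜, A ⊆ W) (hS : #S + 1 = r) :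
    #{A ∈ 𝒜 | S ⊆ A} ≤ #(W \ S) := by
  refine (card_le_card fun A hA => ?_).trans (card_image_le (f := (insert · S)))
  obtain ⟨hA𝒜, hSA⟩ := mem_filter.1 hA
  obtain ⟨a, haS, rfl⟩ := exists_eq_insert_iff.2 ⟨hSA, by rw [hS, h𝒜 hA𝒜]⟩
  exact mem_image_of_mem _ (mem_sdiff.2 ⟨hW _ hA𝒜 (mem_insert_self a S), haS⟩)

theorem card_mul_le_card_shadow_mul_of_forall_subset {𝒜 : Finset (Finset α)} {W : Finset α}
    {r : ℕ} (h𝒜 : (𝒜 : Set (Finset α)).Sized r) (hW : ∀ A ∈ 𝒜, A ⊆ W) :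
    #𝒜 * r ≤ #(∂ 𝒜) * (#W - r + 1) := by
  refine card_mul_le_card_mul' (· ⊆ ·) (fun A hA => ?_) (fun S hS => ?_)
  · rw [← h𝒜 hA, ← card_image_of_injOn A.erase_injOn]
    refine card_le_card ?_
    simp_rw [image_subset_iff, mem_bipartiteBelow]
    exact fun a ha => ⟨erase_mem_shadow hA ha, erase_subset _ _⟩
  · obtain ⟨A, hA, a, haA, rfl⟩ := mem_shadow_iff.1 hS
    have hcard : #(A.erase a) + 1 = r := by rw [card_erase_add_one haA, h𝒜 hA]
    calc #(𝒜.bipartiteAbove (· ⊆ ·) (A.erase a))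
        ≤ #(W \ A.erase a) := card_filter_superset_le_card_sdiff h𝒜 hW hcard
      _ = #W - r + 1 := by
        rw [card_sdiff_of_subset ((erase_subset a A).trans (hW A hA))]
        have hAW := card_le_card (hW A hA)
        rw [h𝒜 hA] at hAW
        omega

theorem sum_card_filter_notMem_eq {U : Finset (Finset α)} {V : Finset α} {k : ℕ}
    (hUk : ∀ A ∈ U, #A = k) (hUV : ∀ A ∈ U, A ⊆ V) :
    ∑ i ∈ V, #{A ∈ U | i ∉ A} = #U * (#V - k) := by
  calc ∑ i ∈ V, #{A ∈ U | i ∉ A}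
      = ∑ A ∈ U, #{i ∈ V | i ∉ A} :=
        sum_card_bipartiteAbove_eq_sum_card_bipartiteBelow (fun i A => i ∉ A)
    _ = ∑ _A ∈ U, (#V - k) := sum_congr rfl fun A hA => by
        rw [filter_notMem_eq_sdiff, card_sdiff_of_subset (hUV A hA), hUk A hA]
    _ = #U * (#V - k) := by rw [sum_const, smul_eq_mul]

end Finset

theorem sum_card_shadow_B_general (n k : ℕ)
    (U : Finset (Finset ℕ)) (hUn : U.card = n) (hUk : ∀ A ∈ U, A.card = k)
    (hV : k < (U.sup id).card) :
    k * n ≤ ∑ i ∈ U.sup id, (Finset.shadow (U.filter fun A => i ∉ A)).card := by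
  set V := U.sup id
  have hUV : ∀ A ∈ U, A ⊆ V := fun A hA => le_sup (f := id) hA
  have local_lym : ∀ i ∈ V,
      #{A ∈ U | i ∉ A} * k ≤ #(∂ {A ∈ U | i ∉ A}) * (#V - k) := fun i hi => by
    have h := card_mul_le_card_shadow_mul_of_forall_subset
      (𝒜 := {A ∈ U | i ∉ A}) (W := V.erase i)
      (fun A hA => hUk A (mem_filter.1 hA).1) fun A hA => by
        obtain ⟨hAU, hiA⟩ := mem_filter.1 hA
        exact subset_erase.2 ⟨hUV A hAU, hiA⟩
    rwa [card_erase_of_mem hi, show #V - 1 - k + 1 = #V - k by omega] at h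
  refine Nat.le_of_mul_le_mul_left ?_ (Nat.sub_pos_of_lt hV)
  calc (#V - k) * (k * n)
      = ∑ i ∈ V, #{A ∈ U | i ∉ A} * k := by
        rw [← sum_mul, sum_card_filter_notMem_eq hUk hUV, hUn]; ring
    _ ≤ ∑ i ∈ V, #(∂ {A ∈ U | i ∉ A}) * (#V - k) := sum_le_sum local_lym
    _ = (#V - k) * ∑ i ∈ V, #(∂ {A ∈ U | i ∉ A}) := by rw [← sum_mul, mul_comm]

/-- Counting inequality: for a family `U` of `n` distinct `k`-element sets with
underlying set `V = ⋃_{A ∈ U} A`, `|V| > k`, and `B i = {A ∈ U : i ∉ A}`, one has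
`∑_{i ∈ V} |∂(B i)| ≥ k * n`. -/
theorem sum_card_shadow_B (n k : ℕ) (hk : 1 ≤ k)
    (U : Finset (Finset ℕ)) (hUn : U.card = n) (hUk : ∀ A ∈ U, A.card = k)
    (hV : k < (U.sup id).card) :
    k * n ≤ ∑ i ∈ U.sup id, (Finset.shadow (U.filter fun A => i ∉ A)).card :=
  sum_card_shadow_B_general n k U hUn hUk hV
end

section
/- Let U be a finite family of k-element sets (k ≥ 2), let i ∈ ⋃_{A∈U} A, and set B_i = {A ∈ U : i ∉ A} and C_i = {A∖{i} : i ∈ A ∈ U}. Then ∂U = ∂B_i ∪ C_i ∪ ({i}(∪)∂C_i), where {i}(∪)F := {{i}∪A : A ∈ F}; moreover ∂B_i and {i}(∪)∂C_i are disjoint. Consequently |∂U| ≥ |∂B_i| + |∂C_i| and |∂U| ≥ |C_i ∪ ∂B_i| + |∂C_i|. -/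
open Finset

/-!
Split `U` as `B ∪ {insert i c : c ∈ C}`. The shadow is additive over unions, and removing one
element from `insert i c` either removes `i`, giving `c`, or removes an element of `c`, giving
`insert i` of a member of `∂C`. Every member of `∂B ∪ C` avoids `i` while every member of
`{i}(∪)∂C` contains it, and `insert i` is injective on sets avoiding `i`, so the cardinalities add.
-/

namespace Finset

open FinsetFamily

variable {α : Type*} [DecidableEq α] {𝒜 ℬ : Finset (Finset α)} {a : α}

theorem shadow_union (𝒜 ℬ : Finset (Finset α)) : ∂ (𝒜 ∪ ℬ) = ∂ 𝒜 ∪ ∂ ℬ :=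
  sup_union

theorem notMem_of_mem_shadow (h : ∀ s ∈ 𝒜, a ∉ s) {t : Finset α} (ht : t ∈ ∂ 𝒜) : a ∉ t := by
  obtain ⟨b, -, hb⟩ := mem_shadow_iff_insert_mem.1 ht
  exact fun hat => h _ hb (mem_insert_of_mem hat)

theorem shadow_image_insert (h : ∀ s ∈ 𝒜, a ∉ s) :
    ∂ (𝒜.image (insert a)) = 𝒜 ∪ (∂ 𝒜).image (insert a) := by
  ext t
  simp only [mem_union, mem_image, mem_shadow_iff, exists_exists_and_eq_and]
  constructor
  · rintro ⟨s, hs, b, hb, rfl⟩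
    obtain rfl | hbs := mem_insert.1 hb
    · exact Or.inl (by rwa [erase_insert (h _ hs)])
    · have hab : a ≠ b := fun hab => h _ hs (hab ▸ hbs)
      exact Or.inr ⟨_, ⟨s, hs, b, hbs, rfl⟩, (erase_insert_of_ne hab).symm⟩
  · rintro (ht | ⟨_, ⟨s, hs, b, hbs, rfl⟩, rfl⟩)
    · exact ⟨t, ht, a, mem_insert_self a t, erase_insert (h _ ht)⟩
    · have hab : a ≠ b := fun hab => h _ hs (hab ▸ hbs)
      exact ⟨s, hs, b, mem_insert_of_mem hbs, erase_insert_of_ne hab⟩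

theorem disjoint_image_insert_of_forall_notMem (h : ∀ s ∈ 𝒜, a ∉ s) :
    Disjoint 𝒜 (ℬ.image (insert a)) := by
  rw [disjoint_left]
  intro s hs hs'
  obtain ⟨t, -, rfl⟩ := mem_image.1 hs'
  exact h _ hs (mem_insert_self a t)

theorem card_image_insert_of_forall_notMem (h : ∀ s ∈ 𝒜, a ∉ s) :
    #(𝒜.image (insert a)) = #𝒜 :=
  card_image_of_injOn (insert_erase_invOn.2.injOn.mono h)

theorem nonMemberSubfamily_union_image_insert_memberSubfamily (a : α) (𝒜 : Finset (Finset α)) :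
    𝒜.nonMemberSubfamily a ∪ (𝒜.memberSubfamily a).image (insert a) = 𝒜 := by
  rw [image_insert_memberSubfamily, nonMemberSubfamily, union_comm, filter_union_filter_not_eq]

theorem notMem_of_mem_shadow_nonMemberSubfamily {t : Finset α}
    (ht : t ∈ ∂ (𝒜.nonMemberSubfamily a)) : a ∉ t :=
  notMem_of_mem_shadow (fun _ hs => (mem_nonMemberSubfamily.1 hs).2) ht

theorem notMem_of_mem_memberSubfamily {t : Finset α} (ht : t ∈ 𝒜.memberSubfamily a) : a ∉ t :=
  (mem_memberSubfamily.1 ht).2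

theorem notMem_of_mem_shadow_memberSubfamily {t : Finset α}
    (ht : t ∈ ∂ (𝒜.memberSubfamily a)) : a ∉ t :=
  notMem_of_mem_shadow (fun _ => notMem_of_mem_memberSubfamily) ht

theorem shadow_eq_shadow_nonMemberSubfamily_union (a : α) (𝒜 : Finset (Finset α)) :
    ∂ 𝒜 = ∂ (𝒜.nonMemberSubfamily a) ∪ 𝒜.memberSubfamily a ∪
      (∂ (𝒜.memberSubfamily a)).image (insert a) := by
  conv_lhs => rw [← nonMemberSubfamily_union_image_insert_memberSubfamily a 𝒜]
  rw [shadow_union, shadow_image_insert (fun _ => notMem_of_mem_memberSubfamily), union_assoc]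

theorem card_memberSubfamily_union_shadow_nonMemberSubfamily_add_card_shadow (a : α)
    (𝒜 : Finset (Finset α)) :
    #(𝒜.memberSubfamily a ∪ ∂ (𝒜.nonMemberSubfamily a)) + #(∂ (𝒜.memberSubfamily a)) =
      #(∂ 𝒜) := by
  have hdisj : Disjoint (𝒜.memberSubfamily a ∪ ∂ (𝒜.nonMemberSubfamily a))
      ((∂ (𝒜.memberSubfamily a)).image (insert a)) :=
    disjoint_image_insert_of_forall_notMem fun _ hs => (mem_union.1 hs).elim
      notMem_of_mem_memberSubfamily notMem_of_mem_shadow_nonMemberSubfamily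
  conv_rhs => rw [shadow_eq_shadow_nonMemberSubfamily_union a 𝒜]
  rw [union_comm (∂ (𝒜.nonMemberSubfamily a)), card_union_of_disjoint hdisj,
    card_image_insert_of_forall_notMem fun _ => notMem_of_mem_shadow_memberSubfamily]

end Finset

theorem shadow_decomposition_general
    (U : Finset (Finset ℕ))
    (i : ℕ)
    (B C : Finset (Finset ℕ))
    (hB : B = U.filter fun A => i ∉ A)
    (hC : C = (U.filter fun A => i ∈ A).image fun A => A.erase i) :
    Finset.shadow U = Finset.shadow B ∪ C ∪ (Finset.shadow C).image (insert i) ∧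
    Disjoint (Finset.shadow B) ((Finset.shadow C).image (insert i)) ∧
    (Finset.shadow B).card + (Finset.shadow C).card ≤ (Finset.shadow U).card ∧
    (C ∪ Finset.shadow B).card + (Finset.shadow C).card ≤ (Finset.shadow U).card := by
  replace hB : B = U.nonMemberSubfamily i := hB
  replace hC : C = U.memberSubfamily i := hC
  subst hB hC
  have hcard := card_memberSubfamily_union_shadow_nonMemberSubfamily_add_card_shadow i U
  refine ⟨shadow_eq_shadow_nonMemberSubfamily_union i U,
    disjoint_image_insert_of_forall_notMem fun _ => notMem_of_mem_shadow_nonMemberSubfamily,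
    ?_, hcard.le⟩
  exact le_trans (Nat.add_le_add_right (card_le_card subset_union_right) _) hcard.le

/-- Decomposition of the shadow: for a family `U` of `k`-element sets (`k ≥ 2`),
`i ∈ ⋃_{A ∈ U} A`, `B = {A ∈ U : i ∉ A}` and `C = {A \ {i} : i ∈ A ∈ U}`, one has
`∂U = ∂B ∪ C ∪ ({i}(∪)∂C)`, the families `∂B` and `{i}(∪)∂C` are disjoint, and
consequently `|∂U| ≥ |∂B| + |∂C|` and `|∂U| ≥ |C ∪ ∂B| + |∂C|`. -/
theorem shadow_decomposition (k : ℕ) (hk : 2 ≤ k)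
    (U : Finset (Finset ℕ)) (hUk : ∀ A ∈ U, A.card = k)
    (i : ℕ) (hi : i ∈ U.sup id)
    (B C : Finset (Finset ℕ))
    (hB : B = U.filter fun A => i ∉ A)
    (hC : C = (U.filter fun A => i ∈ A).image fun A => A.erase i) :
    Finset.shadow U = Finset.shadow B ∪ C ∪ (Finset.shadow C).image (insert i) ∧
    Disjoint (Finset.shadow B) ((Finset.shadow C).image (insert i)) ∧
    (Finset.shadow B).card + (Finset.shadow C).card ≤ (Finset.shadow U).card ∧
    (C ∪ Finset.shadow B).card + (Finset.shadow C).card ≤ (Finset.shadow U).card :=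
  shadow_decomposition_general U i B C hB hC
end

section
/- Let U be a finite family of n distinct k-element sets (k ≥ 1) with underlying set V = ⋃_{A∈U} A of cardinality v, and for i ∈ V set B_i = {A ∈ U : i ∉ A} and C_i = {A∖{i} : i ∈ A ∈ U}. If for every i ∈ V one has |∂B_i| ≤ |C_i|, and moreover for every i ∈ V and every F ∈ ∂B_i all v−k sets of the form F ∪ {j} with j ∈ V∖F belong to U, then U consists of all k-element subsets of V. (Equality-case analysis in the proof of Lemma 2.1.) -/
open Finset

/-!
Call `U` closed under exchange if `(A \ {i}) ∪ {j} ∈ U` whenever `A ∈ U`, `i ∈ A` and `j ∈ V \ A`;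
a nonempty family of `k`-subsets of `V` closed under exchange contains every `k`-subset of `V`,
since each exchange brings a member of `U` one step closer to a given `k`-set.
The exchange `A ↦ (A \ {i}) ∪ {j}` is granted by the second hypothesis (applied to the vertex
`i'`) as soon as some `i' ≠ j` of `V` misses `A`. Otherwise `V = A ∪ {j}`, every set
`M \ {j}` with `j ∈ M ∈ U` lies in the shadow of the members of `U` avoiding `j`, and the
inequality `|∂B_j| ≤ |C_j|` forces this to be all of the shadow, which contains `A \ {i}`.
-/

open scoped FinsetFamily

variable {α : Type*} [DecidableEq α]

theorem powersetCard_subset_of_exchange {U : Finset (Finset α)} {V : Finset α} {k : ℕ}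
    (hU : U.Nonempty) (hUk : ∀ A ∈ U, #A = k)
    (hexch : ∀ A ∈ U, ∀ i ∈ A, ∀ j ∈ V, j ∉ A → insert j (A.erase i) ∈ U) :
    powersetCard k V ⊆ U := by
  intro S hS
  obtain ⟨hSV, hSk⟩ := mem_powersetCard.1 hS
  suffices ∀ m, ∀ A ∈ U, #(S \ A) = m → S ∈ U by
    obtain ⟨A, hA⟩ := hU
    exact this _ A hA rfl
  intro m
  induction m using Nat.strong_induction_on with
  | _ m ih =>
  intro A hA hm
  by_cases hSA : S = A
  · exact hSA ▸ hA
  have hcard : #S = #A := by rw [hSk, hUk A hA]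
  obtain ⟨j, hj⟩ : (S \ A).Nonempty :=
    sdiff_nonempty.2 fun h => hSA (eq_of_subset_of_card_le h hcard.ge)
  obtain ⟨i, hi⟩ : (A \ S).Nonempty := by
    rw [← card_pos, card_sdiff_comm hcard.symm, card_pos]
    exact ⟨j, hj⟩
  obtain ⟨hjS, hjA⟩ := mem_sdiff.1 hj
  obtain ⟨hiA, hiS⟩ := mem_sdiff.1 hi
  refine ih _ ?_ _ (hexch A hA i hiA j (hSV hjS) hjA) rfl
  have hsub : S \ insert j (A.erase i) ⊆ (S \ A).erase j := by
    intro x hx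
    simp only [mem_sdiff, mem_insert, mem_erase, not_or, not_and] at hx ⊢
    exact ⟨hx.2.1, hx.1, fun hxA => hx.2.2 (by rintro rfl; exact hiS hx.1) hxA⟩
  calc #(S \ insert j (A.erase i)) ≤ #((S \ A).erase j) := card_le_card hsub
    _ < #(S \ A) := card_erase_lt_of_mem hj
    _ = m := hm

section LinkOfVertex

variable {U : Finset (Finset α)} {A : Finset α} {j : α}
  (hA : A ∈ U) (hjA : j ∉ A) (hUsub : ∀ M ∈ U, M ⊆ insert j A) (hUcard : ∀ M ∈ U, #M = #A)
include hA hjA hUsub hUcard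

theorem image_erase_subset_shadow_filter_not_mem :
    ((U.filter (j ∈ ·)).image (·.erase j)) ⊆ ∂ (U.filter (j ∉ ·)) := by
  intro F hF
  obtain ⟨M, hM, rfl⟩ := mem_image.1 hF
  obtain ⟨hMU, hjM⟩ := mem_filter.1 hM
  refine mem_shadow_iff_exists_mem_card_add_one.2 ⟨A, mem_filter.2 ⟨hA, hjA⟩, ?_, ?_⟩
  · intro x hx
    obtain ⟨hxj, hxM⟩ := mem_erase.1 hx
    exact (mem_insert.1 (hUsub M hMU hxM)).resolve_left hxj
  · rw [card_erase_add_one hjM, hUcard M hMU]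

theorem insert_erase_mem_of_card_shadow_le
    (h : #(∂ (U.filter (j ∉ ·))) ≤ #((U.filter (j ∈ ·)).image (·.erase j)))
    {i : α} (hi : i ∈ A) : insert j (A.erase i) ∈ U := by
  have hsub := image_erase_subset_shadow_filter_not_mem hA hjA hUsub hUcard
  have hAi : A.erase i ∈ (U.filter (j ∈ ·)).image (·.erase j) := by
    rw [eq_of_subset_of_card_le hsub h]
    exact erase_mem_shadow (mem_filter.2 ⟨hA, hjA⟩) hi
  obtain ⟨M, hM, hMA⟩ := mem_image.1 hAi
  obtain ⟨hMU, hjM⟩ := mem_filter.1 hM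
  rwa [← hMA, insert_erase hjM]

end LinkOfVertex

theorem equality_case_general (k : ℕ) (hk : 1 ≤ k)
    (U : Finset (Finset ℕ)) (hUk : ∀ A ∈ U, A.card = k)
    (h₁ : ∀ i ∈ U.sup id,
      (Finset.shadow (U.filter fun A => i ∉ A)).card ≤
        ((U.filter fun A => i ∈ A).image fun A => A.erase i).card)
    (h₂ : ∀ i ∈ U.sup id, ∀ F ∈ Finset.shadow (U.filter fun A => i ∉ A),
      ∀ j ∈ U.sup id, j ∉ F → j ≠ i → insert j F ∈ U) :
    U = Finset.powersetCard k (U.sup id) := by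
  obtain rfl | hU := U.eq_empty_or_nonempty
  · rw [sup_empty, eq_comm, powersetCard_eq_empty]
    exact hk
  set V := U.sup id
  have hUV : ∀ A ∈ U, A ⊆ V := fun A hA => le_sup (f := id) hA
  refine Subset.antisymm (fun A hA => mem_powersetCard.2 ⟨hUV A hA, hUk A hA⟩)
    (powersetCard_subset_of_exchange hU hUk fun A hA i hi j hjV hjA => ?_)
  by_cases hex : ∃ i' ∈ V, i' ∉ A ∧ i' ≠ j
  · obtain ⟨i', hi'V, hi'A, hi'j⟩ := hex
    exact h₂ i' hi'V _ (erase_mem_shadow (mem_filter.2 ⟨hA, hi'A⟩) hi) j hjV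
      (fun h => hjA (mem_of_mem_erase h)) hi'j.symm
  · push Not at hex
    have hUsub : ∀ M ∈ U, M ⊆ insert j A := fun M hM x hx => by
      by_cases hxA : x ∈ A
      · exact mem_insert_of_mem hxA
      · exact hex x (hUV M hM hx) hxA ▸ mem_insert_self j A
    exact insert_erase_mem_of_card_shadow_le hA hjA hUsub
      (fun M hM => by rw [hUk M hM, hUk A hA]) (h₁ j hjV) hi

/-- Equality-case analysis in the proof of Lemma 2.1: let `U` be a family of `n`
distinct `k`-element sets with underlying set `V = ⋃_{A ∈ U} A` of cardinality `v`,
`B i = {A ∈ U : i ∉ A}` and `C i = {A \ {i} : i ∈ A ∈ U}`.  If `|∂(B i)| ≤ |C i|`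
for every `i ∈ V`, and for every `i ∈ V` and every `F ∈ ∂(B i)` all `v - k` sets
`F ∪ {j}` with `j ∈ V \ F`, `j ≠ i`, belong to `U`, then `U` consists of all
`k`-element subsets of `V`. -/
theorem equality_case (n k : ℕ) (hk : 1 ≤ k)
    (U : Finset (Finset ℕ)) (hUn : U.card = n) (hUk : ∀ A ∈ U, A.card = k)
    (h₁ : ∀ i ∈ U.sup id,
      (Finset.shadow (U.filter fun A => i ∉ A)).card ≤
        ((U.filter fun A => i ∈ A).image fun A => A.erase i).card)
    (h₂ : ∀ i ∈ U.sup id, ∀ F ∈ Finset.shadow (U.filter fun A => i ∉ A),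
      ∀ j ∈ U.sup id, j ∉ F → j ≠ i → insert j F ∈ U) :
    U = Finset.powersetCard k (U.sup id) :=
  equality_case_general k hk U hUk h₁ h₂
end
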